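/- Elementary base-change maximality: let ℓ ≥ k ≥ 2 and let τ be any closed term built from 0, addition, multiplication, and base-k exponentiation x ↦ k^x, with value m. Then the value of τ with every k replaced by ℓ is at most bch(m,k,ℓ), the base-change of the hereditary exponential (addition-and-exponentiation only) base-k normal form of m. -/
import Mathlib


/-- Terms of the elementary notation system `L_k`: generated by `0`,
addition, multiplication, and base-`k` exponentiation `x ↦ k^x`. -/
inductive LTerm : Type
  | zero : LTerm
  | add : LTerm → LTerm → LTerm
  | mul : LTerm → LTerm → LTerm
  | expBase : LTerm → LTerm

/-- Value of an elementary term at base `k`. -/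
def LTerm.val (k : ℕ) : LTerm → ℕ
  | .zero => 0
  | .add s t => s.val k + t.val k
  | .mul s t => s.val k * t.val k
  | .expBase s => k ^ s.val k

/-- Exponential base change: replace base `k` by `l` hereditarily in the
base-`k` normal form `m = k^r + b`, `k^r ≤ m < k^(r+1)`. -/
def ebch (k l m : ℕ) : ℕ :=
  if h : m = 0 ∨ k < 2 then 0
  else l ^ ebch k l (Nat.log k m) + ebch k l (m - k ^ Nat.log k m)
termination_by m
decreasing_by
  · push_neg at h
    exact Nat.log_lt_self k h.1
  · push_neg at h
    exact Nat.sub_lt (Nat.pos_of_ne_zero h.1) (pow_pos (by omega) _)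

lemma ebch_zero (k l : ℕ) : ebch k l 0 = 0 := by rw [ebch]; simp

lemma ebch_pos_eq {k : ℕ} (l : ℕ) (hk : 2 ≤ k) {m : ℕ} (hm : m ≠ 0) :
    ebch k l m = l ^ ebch k l (Nat.log k m) + ebch k l (m - k ^ Nat.log k m) := by
  rw [ebch, dif_neg]; push_neg; exact ⟨hm, by omega⟩

lemma ebch_pow_add {k : ℕ} (l : ℕ) (hk : 2 ≤ k) {r x : ℕ} (h : k ^ r + x < k ^ (r + 1)) :
    ebch k l (k ^ r + x) = l ^ ebch k l r + ebch k l x := by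
  have hpos : k ^ r + x ≠ 0 := by positivity
  have hlog : Nat.log k (k ^ r + x) = r :=
    Nat.log_eq_of_pow_le_of_lt_pow (Nat.le_add_right _ _) h
  rw [ebch_pos_eq l hk hpos, hlog, Nat.add_sub_cancel_left]

lemma ebch_pow {k : ℕ} (l : ℕ) (hk : 2 ≤ k) (r : ℕ) :
    ebch k l (k ^ r) = l ^ ebch k l r := by
  have h : k ^ r + 0 < k ^ (r + 1) := by
    have := Nat.pow_lt_pow_succ (show 1 < k by omega) (n := r)
    omega
  simpa [ebch_zero] using ebch_pow_add l hk h

lemma ebch_one {k : ℕ} (l : ℕ) (hk : 2 ≤ k) : ebch k l 1 = 1 := by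
  have := ebch_pow l hk 0
  simpa [ebch_zero] using this

lemma ebch_digit {k : ℕ} (l : ℕ) (hk : 2 ≤ k) {r m : ℕ} (h : m < k ^ (r + 1)) :
    ebch k l m = m / k ^ r * l ^ ebch k l r + ebch k l (m % k ^ r) := by
  induction m using Nat.strong_induction_on with
  | _ m ih =>
    have hkr : 0 < k ^ r := pow_pos (by omega) _
    by_cases hm : m < k ^ r
    · rw [Nat.div_eq_of_lt hm, Nat.mod_eq_of_lt hm]; simp
    · push_neg at hm
      have h1 : ebch k l m = l ^ ebch k l r + ebch k l (m - k ^ r) := by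
        have : m = k ^ r + (m - k ^ r) := by omega
        rw [show ebch k l m = ebch k l (k ^ r + (m - k ^ r)) by rw [← this]]
        exact ebch_pow_add l hk (by omega)
      rw [h1, ih (m - k ^ r) (by omega) (by omega),
        Nat.div_eq_sub_div hkr hm, Nat.mod_eq_sub_mod hm]
      ring

lemma ebch_key {k l : ℕ} (hk : 2 ≤ k) (hl : k ≤ l) (j : ℕ) :
    (∀ n, 2 * n ≤ j → ∀ m < n, ebch k l m < ebch k l n) ∧
    (∀ r, 2 * r + 1 ≤ j → ∀ m n, m + n ≤ k ^ r →
      ebch k l m + ebch k l n ≤ l ^ ebch k l r) := by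
  induction j using Nat.strong_induction_on with
  | _ j ih =>
    have hl2 : 2 ≤ l := le_trans hk hl
    constructor
    · -- strict monotonicity
      intro n hn m hmn
      have hn0 : n ≠ 0 := by omega
      set r := Nat.log k n with hr
      have hnlt : n < k ^ (r + 1) := Nat.lt_pow_succ_log_self (by omega) n
      have hnge : k ^ r ≤ n := Nat.pow_log_le_self k hn0
      have hkr : 0 < k ^ r := pow_pos (by omega) _
      have hen : ebch k l n = l ^ ebch k l r + ebch k l (n - k ^ r) :=
        ebch_pos_eq l hk hn0
      by_cases hm : k ^ r ≤ m
      · have hlogm : Nat.log k m = r :=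
          Nat.log_eq_of_pow_le_of_lt_pow hm (lt_trans hmn hnlt)
        have hem := ebch_pos_eq l hk (show m ≠ 0 by omega)
        rw [hlogm] at hem
        have hmono := (ih (2 * (n - k ^ r)) (by omega)).1 (n - k ^ r) le_rfl
          (m - k ^ r) (by omega)
        omega
      · push_neg at hm
        have hrn : r < n := Nat.log_lt_self k hn0
        have hsb := (ih (2 * r + 1) (by omega)).2 r le_rfl m 1 (by omega)
        rw [ebch_one l hk] at hsb
        omega
    · -- SB
      intro r hr m n hmn
      match r with
      | 0 =>
        simp only [pow_zero] at hmn ⊢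
        have : (m = 0 ∧ n = 0) ∨ (m = 1 ∧ n = 0) ∨ (m = 0 ∧ n = 1) := by omega
        rcases this with ⟨h1, h2⟩ | ⟨h1, h2⟩ | ⟨h1, h2⟩ <;>
          simp [h1, h2, ebch_zero, ebch_one l hk]
      | r + 1 =>
        have hkr : 0 < k ^ r := pow_pos (by omega) _
        have hsb' := (ih (2 * r + 1) (by omega)).2 r le_rfl
        have hmono : ebch k l r < ebch k l (r + 1) :=
          (ih (2 * (r + 1)) (by omega)).1 (r + 1) le_rfl r (by omega)
        have hkl : k * l ^ ebch k l r ≤ l ^ ebch k l (r + 1) := by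
          calc k * l ^ ebch k l r ≤ l * l ^ ebch k l r := Nat.mul_le_mul_right _ hl
            _ = l ^ (ebch k l r + 1) := by ring
            _ ≤ l ^ ebch k l (r + 1) :=
                Nat.pow_le_pow_right (by omega) (by omega)
        by_cases hm' : m = k ^ (r + 1)
        · have hn0 : n = 0 := by omega
          rw [hn0, hm', ebch_zero, ebch_pow l hk]; omega
        by_cases hn' : n = k ^ (r + 1)
        · have hm0 : m = 0 := by omega
          rw [hm0, hn', ebch_zero, ebch_pow l hk]; omega
        have hmlt : m < k ^ (r + 1) := by omega
        have hnlt : n < k ^ (r + 1) := by omega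
        have hkk : k ^ r * k = k ^ (r + 1) := by rw [pow_succ]
        obtain ⟨a, u, hu, hmau, hdm⟩ :
            ∃ a u, u < k ^ r ∧ m = k ^ r * a + u ∧
              ebch k l m = a * l ^ ebch k l r + ebch k l u :=
          ⟨m / k ^ r, m % k ^ r, Nat.mod_lt _ hkr,
            by rw [Nat.div_add_mod], ebch_digit l hk hmlt⟩
        obtain ⟨b, v, hv, hnbv, hdn⟩ :
            ∃ b v, v < k ^ r ∧ n = k ^ r * b + v ∧
              ebch k l n = b * l ^ ebch k l r + ebch k l v :=
          ⟨n / k ^ r, n % k ^ r, Nat.mod_lt _ hkr,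
            by rw [Nat.div_add_mod], ebch_digit l hk hnlt⟩
        have hbu : ebch k l u ≤ l ^ ebch k l r := by
          have := hsb' u 0 (by omega)
          rw [ebch_zero] at this; omega
        have hbv : ebch k l v ≤ l ^ ebch k l r := by
          have := hsb' v 0 (by omega)
          rw [ebch_zero] at this; omega
        have key : (a + b) * l ^ ebch k l r + ebch k l u + ebch k l v ≤
            k * l ^ ebch k l r := by
          by_cases hmn2 : u + v ≤ k ^ r
          · have hs := hsb' u v hmn2
            have h2 : a + b ≤ k := by
              refine Nat.le_of_mul_le_mul_left ?_ hkr
              have e1 : k ^ r * (a + b) = k ^ r * a + k ^ r * b := by ring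
              omega
            rcases eq_or_lt_of_le h2 with he | hlt2
            · have h3 : k ^ r * a + k ^ r * b = k ^ r * k := by
                have : k ^ r * a + k ^ r * b = k ^ r * (a + b) := by ring
                rw [this, he]
              have huz : u = 0 := by omega
              have hvz : v = 0 := by omega
              rw [huz, hvz, ebch_zero, he]
              simp
            · have h3 : (a + b) * l ^ ebch k l r ≤ (k - 1) * l ^ ebch k l r :=
                Nat.mul_le_mul_right _ (by omega)
              have h4 : (k - 1) * l ^ ebch k l r + l ^ ebch k l r =
                  k * l ^ ebch k l r := by
                calc (k - 1) * l ^ ebch k l r + l ^ ebch k l r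
                    = (k - 1 + 1) * l ^ ebch k l r := by ring
                  _ = k * l ^ ebch k l r := by congr 1; omega
              omega
          · push_neg at hmn2
            have h2 : a + b + 1 < k := by
              refine Nat.lt_of_mul_lt_mul_left (a := k ^ r) ?_
              have e1 : k ^ r * (a + b + 1) = k ^ r * a + k ^ r * b + k ^ r := by
                ring
              omega
            have h3 : (a + b) * l ^ ebch k l r ≤ (k - 2) * l ^ ebch k l r :=
              Nat.mul_le_mul_right _ (by omega)
            have h4 : (k - 2) * l ^ ebch k l r + l ^ ebch k l r + l ^ ebch k l r =
                k * l ^ ebch k l r := by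
              calc (k - 2) * l ^ ebch k l r + l ^ ebch k l r + l ^ ebch k l r
                  = (k - 2 + 1 + 1) * l ^ ebch k l r := by ring
                _ = k * l ^ ebch k l r := by congr 1; omega
            omega
        calc ebch k l m + ebch k l n
            = (a + b) * l ^ ebch k l r + ebch k l u + ebch k l v := by
              rw [hdm, hdn]; ring
          _ ≤ k * l ^ ebch k l r := key
          _ ≤ l ^ ebch k l (r + 1) := hkl

lemma ebch_mono {k l : ℕ} (hk : 2 ≤ k) (hl : k ≤ l) {m n : ℕ} (h : m < n) :
    ebch k l m < ebch k l n :=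
  (ebch_key hk hl (2 * n)).1 n le_rfl m h

lemma ebch_sb {k l : ℕ} (hk : 2 ≤ k) (hl : k ≤ l) {r m n : ℕ} (h : m + n ≤ k ^ r) :
    ebch k l m + ebch k l n ≤ l ^ ebch k l r :=
  (ebch_key hk hl (2 * r + 1)).2 r le_rfl m n h

lemma ebch_add_pow {k l : ℕ} (hk : 2 ≤ k) (hl : k ≤ l) (m t : ℕ) :
    ebch k l m + l ^ ebch k l t ≤ ebch k l (m + k ^ t) := by
  induction m using Nat.strong_induction_on generalizing t with
  | _ m ih =>
    have hk1 : 1 < k := by omega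
    have hktpos : 0 < k ^ t := pow_pos (by omega) _
    rcases eq_or_ne m 0 with hm0 | hm0
    · rw [hm0, ebch_zero, zero_add, zero_add, ebch_pow l hk]
    set s := Nat.log k m with hs
    have hs1 : k ^ s ≤ m := Nat.pow_log_le_self k hm0
    have hs2 : m < k ^ (s + 1) := Nat.lt_pow_succ_log_self hk1 m
    have hkspos : 0 < k ^ s := pow_pos (by omega) _
    by_cases hmt : m < k ^ t
    · -- m is the small part
      have h : k ^ t + m < k ^ (t + 1) := by
        have : k ^ t * 2 ≤ k ^ t * k := Nat.mul_le_mul_left _ hk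
        have hp : k ^ t * k = k ^ (t + 1) := by rw [pow_succ]
        omega
      rw [show m + k ^ t = k ^ t + m by ring, ebch_pow_add l hk h]
      omega
    push_neg at hmt
    have hts : t ≤ s := by
      by_contra h
      push_neg at h
      have : k ^ (s + 1) ≤ k ^ t := Nat.pow_le_pow_right (by omega) (by omega)
      omega
    by_cases hcase : m + k ^ t < k ^ (s + 1)
    · -- no carry into the top digit
      have heq : m + k ^ t = k ^ s + (m - k ^ s + k ^ t) := by omega
      rw [heq, ebch_pow_add l hk (by omega)]
      have hihx := ih (m - k ^ s) (by omega) t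
      have hem : ebch k l m = l ^ ebch k l s + ebch k l (m - k ^ s) :=
        ebch_pos_eq l hk hm0
      omega
    · push_neg at hcase
      rcases lt_or_eq_of_le hts with hts' | hts'
      · -- t < s : reassociate
        have hklt : k ^ t < k ^ s := Nat.pow_lt_pow_right hk1 hts'
        have h1 := ih (m - k ^ s + k ^ t) (by omega) s
        have h2 := ih (m - k ^ s) (by omega) t
        have hem : ebch k l m = l ^ ebch k l s + ebch k l (m - k ^ s) :=
          ebch_pos_eq l hk hm0
        have he : m - k ^ s + k ^ t + k ^ s = m + k ^ t := by omega
        rw [he] at h1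
        omega
      · -- t = s : carry, top digit of m must be k-1
        subst hts'
        have hp1 : k ^ s * k = k ^ (s + 1) := by rw [pow_succ]
        have hp2 : k ^ (s + 1) * k = k ^ (s + 2) := by rw [← pow_succ]
        have hd : m / k ^ s = k - 1 := by
          refine Nat.div_eq_of_lt_le ?_ ?_
          · have : (k - 1) * k ^ s + k ^ s = k * k ^ s := by
              calc (k - 1) * k ^ s + k ^ s = (k - 1 + 1) * k ^ s := by ring
                _ = k * k ^ s := by congr 1; omega
            have hmul : k * k ^ s = k ^ (s + 1) := by rw [← pow_succ']
            omega
          · have : (k - 1 + 1) * k ^ s = k * k ^ s := by congr 1; omega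
            have hmul : k * k ^ s = k ^ (s + 1) := by rw [← pow_succ']
            omega
        have hdm := ebch_digit l hk (r := s) hs2
        rw [hd] at hdm
        have hdiv := Nat.div_add_mod m (k ^ s)
        rw [hd] at hdiv
        have hmodlt : m % k ^ s < k ^ s := Nat.mod_lt _ hktpos
        -- m + k^s = k^(s+1) + m % k^s
        have hsplit : m + k ^ s = k ^ (s + 1) + m % k ^ s := by
          have e1 : k ^ s * (k - 1) + k ^ s = k ^ s * k := by
            calc k ^ s * (k - 1) + k ^ s = k ^ s * (k - 1 + 1) := by ring
              _ = k ^ s * k := by congr 1; omega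
          omega
        have hlt2 : k ^ (s + 1) + m % k ^ s < k ^ (s + 2) := by
          have h2k : k ^ (s + 1) * 2 ≤ k ^ (s + 1) * k := Nat.mul_le_mul_left _ hk
          have hle : k ^ s ≤ k ^ (s + 1) := Nat.pow_le_pow_right (by omega) (by omega)
          omega
        rw [hsplit, ebch_pow_add l hk hlt2]
        have hmono : ebch k l s < ebch k l (s + 1) := ebch_mono hk hl (by omega)
        have hkl : k * l ^ ebch k l s ≤ l ^ ebch k l (s + 1) := by
          calc k * l ^ ebch k l s ≤ l * l ^ ebch k l s := Nat.mul_le_mul_right _ hl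
            _ = l ^ (ebch k l s + 1) := by ring
            _ ≤ l ^ ebch k l (s + 1) := Nat.pow_le_pow_right (by omega) (by omega)
        have e2 : (k - 1) * l ^ ebch k l s + l ^ ebch k l s = k * l ^ ebch k l s := by
          calc (k - 1) * l ^ ebch k l s + l ^ ebch k l s
              = (k - 1 + 1) * l ^ ebch k l s := by ring
            _ = k * l ^ ebch k l s := by congr 1; omega
        omega

lemma ebch_superadd {k l : ℕ} (hk : 2 ≤ k) (hl : k ≤ l) (m n : ℕ) :
    ebch k l m + ebch k l n ≤ ebch k l (m + n) := by
  induction n using Nat.strong_induction_on generalizing m with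
  | _ n ih =>
    rcases eq_or_ne n 0 with hn0 | hn0
    · rw [hn0, ebch_zero]; simp
    set t := Nat.log k n with ht
    have ht1 : k ^ t ≤ n := Nat.pow_log_le_self k hn0
    have hktpos : 0 < k ^ t := pow_pos (by omega) _
    have hen : ebch k l n = l ^ ebch k l t + ebch k l (n - k ^ t) :=
      ebch_pos_eq l hk hn0
    have h1 := ebch_add_pow hk hl m t
    have h2 := ih (n - k ^ t) (by omega) (m + k ^ t)
    have he : m + k ^ t + (n - k ^ t) = m + n := by omega
    rw [he] at h2
    omega

lemma ebch_mul_pow {k l : ℕ} (hk : 2 ≤ k) (hl : k ≤ l) (m t : ℕ) :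
    ebch k l m * l ^ ebch k l t ≤ ebch k l (m * k ^ t) := by
  induction m using Nat.strong_induction_on with
  | _ m ih =>
    rcases eq_or_ne m 0 with hm0 | hm0
    · rw [hm0, ebch_zero]; simp [ebch_zero]
    set s := Nat.log k m with hs
    have hs1 : k ^ s ≤ m := Nat.pow_log_le_self k hm0
    have hkspos : 0 < k ^ s := pow_pos (by omega) _
    have hem : ebch k l m = l ^ ebch k l s + ebch k l (m - k ^ s) :=
      ebch_pos_eq l hk hm0
    have hsplit : m * k ^ t = k ^ (s + t) + (m - k ^ s) * k ^ t := by
      have : m * k ^ t = (k ^ s + (m - k ^ s)) * k ^ t := by congr 1; omega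
      rw [this, add_mul, pow_add]
    have hsa := ebch_superadd hk hl (k ^ (s + t)) ((m - k ^ s) * k ^ t)
    rw [← hsplit] at hsa
    have hpow : l ^ (ebch k l s) * l ^ (ebch k l t) ≤ l ^ ebch k l (s + t) := by
      rw [← pow_add]
      exact Nat.pow_le_pow_right (by omega) (ebch_superadd hk hl s t)
    rw [ebch_pow l hk (s + t)] at hsa
    have hih := ih (m - k ^ s) (by omega)
    calc ebch k l m * l ^ ebch k l t
        = l ^ ebch k l s * l ^ ebch k l t + ebch k l (m - k ^ s) * l ^ ebch k l t := by
          rw [hem]; ring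
      _ ≤ l ^ ebch k l (s + t) + ebch k l ((m - k ^ s) * k ^ t) :=
          Nat.add_le_add hpow hih
      _ ≤ ebch k l (m * k ^ t) := hsa

lemma ebch_supermul {k l : ℕ} (hk : 2 ≤ k) (hl : k ≤ l) (m n : ℕ) :
    ebch k l m * ebch k l n ≤ ebch k l (m * n) := by
  induction n using Nat.strong_induction_on generalizing m with
  | _ n ih =>
    rcases eq_or_ne n 0 with hn0 | hn0
    · rw [hn0, ebch_zero]; simp [ebch_zero]
    set t := Nat.log k n with ht
    have ht1 : k ^ t ≤ n := Nat.pow_log_le_self k hn0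
    have hktpos : 0 < k ^ t := pow_pos (by omega) _
    have hen : ebch k l n = l ^ ebch k l t + ebch k l (n - k ^ t) :=
      ebch_pos_eq l hk hn0
    have h1 := ebch_mul_pow hk hl m t
    have h2 := ih (n - k ^ t) (by omega) m
    have hsa := ebch_superadd hk hl (m * k ^ t) (m * (n - k ^ t))
    have he : m * k ^ t + m * (n - k ^ t) = m * n := by
      rw [← Nat.mul_add]; congr 1; omega
    rw [he] at hsa
    calc ebch k l m * ebch k l n
        = ebch k l m * l ^ ebch k l t + ebch k l m * ebch k l (n - k ^ t) := by
          rw [hen, Nat.mul_add]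
      _ ≤ ebch k l (m * k ^ t) + ebch k l (m * (n - k ^ t)) :=
          Nat.add_le_add h1 h2
      _ ≤ ebch k l (m * n) := hsa

/-- Elementary base-change maximality: for `ℓ ≥ k ≥ 2` and any closed term `τ`
built from `0`, `+`, `·`, and `x ↦ k^x` with value `m`, the value of `τ` with
every `k` replaced by `ℓ` is at most `bch(m,k,ℓ)`, the base change of the
hereditary exponential base-`k` normal form of `m`. -/
theorem lterm_base_change_maximality (k l : ℕ) (hk : 2 ≤ k) (hl : k ≤ l)
    (τ : LTerm) : τ.val l ≤ ebch k l (τ.val k) := by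
  induction τ with
  | zero => simp [LTerm.val, ebch_zero]
  | add s t ihs iht =>
      calc LTerm.val l (s.add t) = s.val l + t.val l := rfl
        _ ≤ ebch k l (s.val k) + ebch k l (t.val k) := Nat.add_le_add ihs iht
        _ ≤ ebch k l (s.val k + t.val k) := ebch_superadd hk hl _ _
        _ = ebch k l (LTerm.val k (s.add t)) := rfl
  | mul s t ihs iht =>
      calc LTerm.val l (s.mul t) = s.val l * t.val l := rfl
        _ ≤ ebch k l (s.val k) * ebch k l (t.val k) := Nat.mul_le_mul ihs iht
        _ ≤ ebch k l (s.val k * t.val k) := ebch_supermul hk hl _ _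
        _ = ebch k l (LTerm.val k (s.mul t)) := rfl
  | expBase s ihs =>
      calc LTerm.val l s.expBase = l ^ s.val l := rfl
        _ ≤ l ^ ebch k l (s.val k) := Nat.pow_le_pow_right (by omega) ihs
        _ = ebch k l (k ^ s.val k) := (ebch_pow l hk _).symm
        _ = ebch k l (LTerm.val k s.expBase) := rfl
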